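/- arXiv:2605.01415 — 2 statements merged into one kernel-verified Lean document; each statement's English description precedes it below -/
import Mathlib

section
/- Let η > 0, δ > 0, let g : ℝ → ℝ be strictly increasing with g(0) = 1/2 and 0 < g(x) < 1 for all x, and let b₁, b₂ ∈ ℝ. Define two-node routing dynamics: m₁, m₂ : ℕ → ℝ with utilities Uᵢ(t) = bᵢ + η·mᵢ(t), task shares s₁(t) = g(U₁(t) − U₂(t)) and s₂(t) = 1 − s₁(t), and updates mᵢ(t+1) = mᵢ(t) + δ·sᵢ(t). If U₁(0) > U₂(0), then for every t: U₁(t) > U₂(t), s₁(t) > 1/2, and the utility gap D(t) = U₁(t) − U₂(t) is strictly increasing in t. -/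
/-- Proposition 3 (Concentration equilibrium), two-node routing dynamics:
an initial utility advantage is self-reinforcing. For all `t`, `U₁ t > U₂ t`,
the task share `s₁ t > 1/2`, and the utility gap `D(t) = U₁ t − U₂ t` is
strictly increasing in `t`. -/
theorem concentration_self_reinforcing
    (η δ : ℝ) (hη : 0 < η) (hδ : 0 < δ)
    (g : ℝ → ℝ) (hg : StrictMono g) (hg0 : g 0 = 1 / 2)
    (hgb : ∀ x, 0 < g x ∧ g x < 1)
    (b₁ b₂ : ℝ)
    (m₁ m₂ U₁ U₂ s₁ s₂ : ℕ → ℝ)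
    (hU₁ : ∀ t, U₁ t = b₁ + η * m₁ t)
    (hU₂ : ∀ t, U₂ t = b₂ + η * m₂ t)
    (hs₁ : ∀ t, s₁ t = g (U₁ t - U₂ t))
    (hs₂ : ∀ t, s₂ t = 1 - s₁ t)
    (hm₁ : ∀ t, m₁ (t + 1) = m₁ t + δ * s₁ t)
    (hm₂ : ∀ t, m₂ (t + 1) = m₂ t + δ * s₂ t)
    (h0 : U₁ 0 > U₂ 0) :
    (∀ t, U₁ t > U₂ t ∧ s₁ t > 1 / 2) ∧
      StrictMono (fun t => U₁ t - U₂ t) := by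
  have key : ∀ t, U₁ t > U₂ t := by
    intro t
    induction t with
    | zero => exact h0
    | succ n ih =>
      have hs : s₁ n > 1 / 2 := by
        rw [hs₁ n, ← hg0]; exact hg (by linarith)
      have : U₁ (n+1) - U₂ (n+1) = (U₁ n - U₂ n) + η * δ * (2 * s₁ n - 1) := by
        rw [hU₁, hU₂, hU₁, hU₂, hm₁, hm₂, hs₂]; ring
      have hp := mul_pos (mul_pos hη hδ) (by linarith : (0:ℝ) < 2 * s₁ n - 1)
      linarith
  have hs : ∀ t, s₁ t > 1 / 2 := by
    intro t
    rw [hs₁ t, ← hg0]; exact hg (by linarith [key t])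
  refine ⟨fun t => ⟨key t, hs t⟩, strictMono_nat_of_lt_succ fun n => ?_⟩
  show U₁ n - U₂ n < U₁ (n+1) - U₂ (n+1)
  have : U₁ (n+1) - U₂ (n+1) = (U₁ n - U₂ n) + η * δ * (2 * s₁ n - 1) := by
    rw [hU₁, hU₂, hU₁, hU₂, hm₁, hm₂, hs₂]; ring
  have hp := mul_pos (mul_pos hη hδ) (by linarith [hs n] : (0:ℝ) < 2 * s₁ n - 1)
  linarith
end

section
/- Let η > 0, δ > 0, let g : ℝ → ℝ be strictly increasing with g(0) = 1/2, 0 < g(x) < 1 for all x, and g(x) → 1 as x → ∞, and let b₁, b₂ ∈ ℝ. Consider the two-node routing dynamics with utilities Uᵢ(t) = bᵢ + η·mᵢ(t), task shares s₁(t) = g(U₁(t) − U₂(t)), s₂(t) = 1 − s₁(t), and updates mᵢ(t+1) = mᵢ(t) + δ·sᵢ(t). If U₁(0) > U₂(0), then the utility gap D(t) = U₁(t) − U₂(t) tends to ∞ and s₁(t) → 1 as t → ∞; i.e., the leading node captures the full task share in the limit. -/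
/-- Convergence claim of Proposition 3 (Concentration equilibrium): in the
two-node routing dynamics with `g(x) → 1` as `x → ∞`, an initial utility
advantage makes the utility gap diverge and the leading node's task share
converge to `1`. -/
theorem concentration_full_capture
    (η δ : ℝ) (hη : 0 < η) (hδ : 0 < δ)
    (g : ℝ → ℝ) (hg : StrictMono g) (hg0 : g 0 = 1 / 2)
    (hgb : ∀ x, 0 < g x ∧ g x < 1)
    (hglim : Filter.Tendsto g Filter.atTop (nhds 1))
    (b₁ b₂ : ℝ)
    (m₁ m₂ U₁ U₂ s₁ s₂ : ℕ → ℝ)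
    (hU₁ : ∀ t, U₁ t = b₁ + η * m₁ t)
    (hU₂ : ∀ t, U₂ t = b₂ + η * m₂ t)
    (hs₁ : ∀ t, s₁ t = g (U₁ t - U₂ t))
    (hs₂ : ∀ t, s₂ t = 1 - s₁ t)
    (hm₁ : ∀ t, m₁ (t + 1) = m₁ t + δ * s₁ t)
    (hm₂ : ∀ t, m₂ (t + 1) = m₂ t + δ * s₂ t)
    (h0 : U₁ 0 > U₂ 0) :
    Filter.Tendsto (fun t => U₁ t - U₂ t) Filter.atTop Filter.atTop ∧
      Filter.Tendsto s₁ Filter.atTop (nhds 1) := by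
  set D : ℕ → ℝ := fun t => U₁ t - U₂ t with hD
  have hrec : ∀ t, D (t + 1) = D t + η * δ * (2 * g (D t) - 1) := by
    intro t
    simp only [hD, hU₁, hU₂, hm₁, hm₂, hs₂ t, hs₁ t]
    ring
  have hD0 : 0 < D 0 := sub_pos.mpr h0
  set c : ℝ := η * δ * (2 * g (D 0) - 1) with hc
  have hgD0 : 1 / 2 < g (D 0) := hg0 ▸ hg hD0
  have hcpos : 0 < c := by
    apply mul_pos (mul_pos hη hδ)
    linarith
  have hge : ∀ t : ℕ, D 0 + (t : ℝ) * c ≤ D t := by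
    intro t
    induction t with
    | zero => simp
    | succ n ih =>
      have hDn : D 0 ≤ D n := by
        have : 0 ≤ (n : ℝ) * c := mul_nonneg (Nat.cast_nonneg n) hcpos.le
        linarith
      have hmono : g (D 0) ≤ g (D n) := hg.monotone hDn
      have := hrec n
      push_cast
      have : c ≤ η * δ * (2 * g (D n) - 1) := by
        apply mul_le_mul_of_nonneg_left _ (mul_pos hη hδ).le
        linarith
      rw [hrec n]
      push_cast
      nlinarith
  have hDtop : Filter.Tendsto D Filter.atTop Filter.atTop := by
    apply Filter.tendsto_atTop_mono hge
    apply Filter.tendsto_atTop_add_const_left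
    exact Filter.Tendsto.atTop_mul_const hcpos tendsto_natCast_atTop_atTop
  refine ⟨hDtop, ?_⟩
  have : s₁ = g ∘ D := funext fun t => hs₁ t
  rw [this]
  exact hglim.comp hDtop
end
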